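/- Let T be a pruned tree on a non-empty countable set A and let X be the set of infinite branches of T with its cylinder-set topology. If g₀ ≥ g₁ ≥ ⋯ is a non-increasing sequence of lower semicontinuous functions from X to ℝ converging pointwise to a function f : X → ℝ, then f is a limsup function, i.e., there exists u : T → ℝ such that f(x) = limsup_{t→∞} u(x₀,…,x_t) for every x ∈ X. -/
import Mathlib


open Filter Topology

/-- The initial segment `(x₀, …, x_{n-1})` of an infinite sequence `x`. -/
def initSeg {β : Type*} (x : ℕ → β) (n : ℕ) : List β :=
  List.ofFn fun i : Fin n => x i

/-- `T` is a pruned tree on `A`: it contains the empty sequence, is closed under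
prefixes, and every element has a proper extension in `T`. -/
def IsPrunedTree {A : Type*} (T : Set (List A)) : Prop :=
  [] ∈ T ∧ (∀ s ∈ T, ∀ t : List A, t <+: s → t ∈ T) ∧ ∀ s ∈ T, ∃ a : A, s ++ [a] ∈ T

/-- The space `X` of infinite branches of the tree `T`, topologized as a subspace of
the product `ℕ → A` (with `A` discrete); this is exactly the cylinder-set topology. -/
abbrev Branches {A : Type*} (T : Set (List A)) : Type _ :=
  {x : ℕ → A // ∀ n : ℕ, initSeg x n ∈ T}

/-- The cylinder set `O(s)` of all branches with initial segment `s`. -/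
def cyl {A : Type*} (T : Set (List A)) (s : List A) : Set (Branches T) :=
  {x | initSeg x.val s.length = s}

/-- `f : X → ℝ` is a limsup function: there is `u` defined on finite sequences with
`f x = limsup_{t → ∞} u (x₀, …, x_t)` for every branch `x` (the limsup being computed
in the extended reals and required to equal the real number `f x`). -/
def IsLimsupFunction {A : Type*} {T : Set (List A)} (f : Branches T → ℝ) : Prop :=
  ∃ u : List A → ℝ, ∀ x : Branches T,
    (f x : EReal) = Filter.limsup (fun t : ℕ => (u (initSeg x.val (t + 1)) : EReal)) Filter.atTop

/-- `f` is of Baire class 1: a pointwise limit of continuous functions. -/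
def BaireClassOne {X : Type*} [TopologicalSpace X] (f : X → ℝ) : Prop :=
  ∃ g : ℕ → X → ℝ, (∀ n, Continuous (g n)) ∧
    ∀ x, Filter.Tendsto (fun n => g n x) Filter.atTop (nhds (f x))

/-- A Cantor set: a subset homeomorphic to the Cantor space `2^ℕ`. -/
def IsCantorSet {X : Type*} [TopologicalSpace X] (C : Set X) : Prop :=
  Nonempty (C ≃ₜ (ℕ → Bool))

/-- A Bernstein set: neither it nor its complement contains a nonempty perfect set. -/
def IsBernsteinSet {X : Type*} [TopologicalSpace X] (B : Set X) : Prop :=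
  ∀ P : Set X, Perfect P → P.Nonempty → ¬ P ⊆ B ∧ ¬ P ⊆ Bᶜ

/-- A co-analytic set: the complement of an analytic set. -/
def IsCoanalytic {X : Type*} [TopologicalSpace X] (s : Set X) : Prop :=
  MeasureTheory.AnalyticSet sᶜ

/-- The sequence of moves produced by Player I's strategy `σ` against the sequence `v`
of moves of Player II: Player I's `n`-th move depends on `(v₀, …, v_{n-1})`. -/
def playI {A M : Type*} (σ : List M → A) (v : ℕ → M) : ℕ → A :=
  fun n => σ (initSeg v n)

/-- Player II has a winning strategy in the game `Γ(f)`: a strategy for Player II assigns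
to each position `(x₀, …, x_t)` of moves of Player I a real number `v_t` (Player II's own
previous moves being determined), and it is winning if for every run, i.e. every branch
`x` that Player I may produce, `f x = limsup_{t → ∞} v_t`. -/
def PlayerIIWinsGamma {A : Type*} {T : Set (List A)} (f : Branches T → ℝ) : Prop :=
  ∃ τ : List A → ℝ, ∀ x : Branches T,
    (f x : EReal) = Filter.limsup (fun t : ℕ => (τ (initSeg x.val (t + 1)) : EReal)) Filter.atTop

/-- Player I has a winning strategy in the game `Γ_R(f)` where Player II's moves are
restricted to `R`: a strategy for Player I assigns to each position `(v₀, …, v_{n-1})` of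
moves of Player II a point of `A`, and it is winning if against every sequence of moves
of Player II in `R` the moves of Player I are legal (all initial segments lie in `T`) and
the resulting branch `x` satisfies `f x ≠ limsup_{t → ∞} v_t`. -/
def PlayerIWinsGammaR {A : Type*} {T : Set (List A)} (R : Set ℝ) (f : Branches T → ℝ) :
    Prop :=
  ∃ σ : List ℝ → A, ∀ v : ℕ → ℝ, (∀ t, v t ∈ R) →
    ∃ h : ∀ n : ℕ, initSeg (playI σ v) n ∈ T,
      (f ⟨playI σ v, h⟩ : EReal) ≠ Filter.limsup (fun t : ℕ => (v t : EReal)) Filter.atTop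

/-- Player I has a winning strategy in the game `Γ(f)`. -/
def PlayerIWinsGamma {A : Type*} {T : Set (List A)} (f : Branches T → ℝ) : Prop :=
  ∃ σ : List ℝ → A, ∀ v : ℕ → ℝ,
    ∃ h : ∀ n : ℕ, initSeg (playI σ v) n ∈ T,
      (f ⟨playI σ v, h⟩ : EReal) ≠ Filter.limsup (fun t : ℕ => (v t : EReal)) Filter.atTop

/-- Player II has a winning strategy in the game `Γ'(f)`, in which Player II's moves are
pairs `(v_t, w_t)` of reals and Player II wins a run iff
`f x = limsup_{t → ∞} v_t = liminf_{t → ∞} w_t`. -/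
def PlayerIIWinsGamma' {A : Type*} {T : Set (List A)} (f : Branches T → ℝ) : Prop :=
  ∃ τ : List A → ℝ × ℝ, ∀ x : Branches T,
    (f x : EReal) =
      Filter.limsup (fun t : ℕ => ((τ (initSeg x.val (t + 1))).1 : EReal)) Filter.atTop ∧
    (f x : EReal) =
      Filter.liminf (fun t : ℕ => ((τ (initSeg x.val (t + 1))).2 : EReal)) Filter.atTop

/-- Player I has a winning strategy in the game `Γ'(f)`. -/
def PlayerIWinsGamma' {A : Type*} {T : Set (List A)} (f : Branches T → ℝ) : Prop :=
  ∃ σ : List (ℝ × ℝ) → A, ∀ v : ℕ → ℝ × ℝ,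
    ∃ h : ∀ n : ℕ, initSeg (playI σ v) n ∈ T,
      ¬ ((f ⟨playI σ v, h⟩ : EReal) =
            Filter.limsup (fun t : ℕ => ((v t).1 : EReal)) Filter.atTop ∧
         (f ⟨playI σ v, h⟩ : EReal) =
            Filter.liminf (fun t : ℕ => ((v t).2 : EReal)) Filter.atTop)

section LimsupAux

variable {β : Type*}

lemma initSeg_length (x : ℕ → β) (n : ℕ) : (initSeg x n).length = n := by
  simp [initSeg]

lemma initSeg_zero (x : ℕ → β) : initSeg x 0 = [] := by
  simp [initSeg]

lemma initSeg_succ (x : ℕ → β) (n : ℕ) : initSeg x (n + 1) = initSeg x n ++ [x n] := by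
  rw [initSeg, initSeg, List.ofFn_succ', List.concat_eq_append]
  simp

lemma initSeg_eq_imp {x y : ℕ → β} {n : ℕ} (h : initSeg y n = initSeg x n) :
    ∀ i < n, y i = x i := by
  intro i hi
  have h2 := List.ofFn_injective h
  exact congrFun h2 ⟨i, hi⟩

variable {A : Type*}

open Classical in
/-- counter climbing a ladder of conditions, processing the list from the left. -/
noncomputable def climbAux (P : ℕ → List A → Prop) : List A → ℕ
  | [] => 0
  | a :: r =>
      if P (climbAux P r + 1) ((a :: r).reverse) then climbAux P r + 1 else climbAux P r

noncomputable def climb (P : ℕ → List A → Prop) (s : List A) : ℕ :=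
  climbAux P s.reverse

lemma climb_nil (P : ℕ → List A → Prop) : climb P [] = 0 := rfl

open Classical in
lemma climb_concat (P : ℕ → List A → Prop) (s : List A) (a : A) :
    climb P (s ++ [a]) =
      if P (climb P s + 1) (s ++ [a]) then climb P s + 1 else climb P s := by
  unfold climb
  rw [List.reverse_append]
  simp [climbAux]

lemma climbAux_le (P : ℕ → List A → Prop) : ∀ l : List A, climbAux P l ≤ l.length := by
  intro l
  induction l with
  | nil => simp [climbAux]
  | cons a r ih =>
      rw [climbAux]
      split <;> simp <;> omega

lemma climb_le_length (P : ℕ → List A → Prop) (s : List A) : climb P s ≤ s.length := by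
  have := climbAux_le P s.reverse
  simpa [climb] using this

variable {T : Set (List A)}

/-- The cylinder of `s` is contained in `{g k > q}`. -/
def GoodP (g : ℕ → Branches T → ℝ) (q : ℚ) (k : ℕ) (s : List A) : Prop :=
  ∀ y : Branches T, initSeg y.val s.length = s → (q : ℝ) < g k y

noncomputable def lev (g : ℕ → Branches T → ℝ) (q : ℚ) (s : List A) : ℕ :=
  climb (GoodP g q) s

open Classical in
lemma lev_concat (g : ℕ → Branches T → ℝ) (q : ℚ) (s : List A) (a : A) :
    lev g q (s ++ [a]) =
      if GoodP g q (lev g q s + 1) (s ++ [a]) then lev g q s + 1 else lev g q s :=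
  climb_concat _ _ _

lemma lev_concat_good {g : ℕ → Branches T → ℝ} {q : ℚ} {s : List A} {a : A}
    (h : lev g q (s ++ [a]) = lev g q s + 1) : GoodP g q (lev g q s + 1) (s ++ [a]) := by
  by_contra hP
  rw [lev_concat, if_neg hP] at h
  omega

/-- `q` registers progress at node `s`. -/
def CountedQ (g : ℕ → Branches T → ℝ) (q : ℚ) (s : List A) : Prop :=
  lev g q s = lev g q s.dropLast + 1 ∧ (Denumerable.eqv ℚ) q ≤ lev g q s

open Classical in
noncomputable def uFun (g : ℕ → Branches T → ℝ) (s : List A) : ℝ :=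
  (insert (-(s.length : ℝ))
    (((Finset.range (s.length + 1)).filter
        (fun i => CountedQ g ((Denumerable.eqv ℚ).symm i) s)).image
      (fun i => (((Denumerable.eqv ℚ).symm i : ℚ) : ℝ)))).max'
    (Finset.insert_nonempty _ _)

open Classical in
lemma le_uFun {g : ℕ → Branches T → ℝ} {q : ℚ} {s : List A} (h : CountedQ g q s) :
    (q : ℝ) ≤ uFun g s := by
  apply Finset.le_max'
  apply Finset.mem_insert_of_mem
  refine Finset.mem_image.2 ⟨(Denumerable.eqv ℚ) q, ?_, ?_⟩
  · refine Finset.mem_filter.2 ⟨Finset.mem_range.2 ?_, ?_⟩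
    · have h1 := h.2
      have h3 : lev g q s ≤ s.length := climb_le_length (GoodP g q) s
      omega
    · rw [Equiv.symm_apply_apply]
      exact h
  · rw [Equiv.symm_apply_apply]

open Classical in
lemma uFun_lt {g : ℕ → Branches T → ℝ} {s : List A} {c : ℝ}
    (h1 : -(s.length : ℝ) < c) (h2 : ∀ q : ℚ, CountedQ g q s → (q : ℝ) < c) :
    uFun g s < c := by
  rw [uFun, Finset.max'_lt_iff]
  intro b hb
  rcases Finset.mem_insert.1 hb with rfl | hb
  · exact h1
  · obtain ⟨i, hi, rfl⟩ := Finset.mem_image.1 hb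
    exact h2 _ (Finset.mem_filter.1 hi).2

end LimsupAux

/-- If `g₀ ≥ g₁ ≥ ⋯` is a non-increasing sequence of lower semicontinuous functions
converging pointwise to `f`, then `f` is a limsup function. -/
theorem isLimsupFunction_of_antitone_pointwiseLimit_lsc
    {A : Type*} [Countable A] [Nonempty A] [TopologicalSpace A] [DiscreteTopology A]
    {T : Set (List A)} (hT : IsPrunedTree T) (f : Branches T → ℝ)
    (g : ℕ → Branches T → ℝ) (hlsc : ∀ n, LowerSemicontinuous (g n)) (hmono : Antitone g)
    (hlim : ∀ x, Filter.Tendsto (fun n => g n x) Filter.atTop (nhds (f x))) :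
    IsLimsupFunction f := by
  classical
  refine ⟨uFun g, fun x => ?_⟩
  set S : ℕ → List A := initSeg x.val with hS
  set L : ℚ → ℕ → ℕ := fun q t => lev g q (S t) with hLdef
  have hSlen : ∀ t, (S t).length = t := fun t => initSeg_length _ _
  have hSsucc : ∀ t, S (t + 1) = S t ++ [x.val t] := fun t => initSeg_succ _ _
  have hSdrop : ∀ t, (S (t + 1)).dropLast = S t := by
    intro t
    rw [hSsucc t]
    simp
  have hgf : ∀ n, f x ≤ g n x := by
    intro n
    refine le_of_tendsto (hlim x) ?_
    exact Filter.eventually_atTop.2 ⟨n, fun m hm => (hmono hm) x⟩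
  -- cylinder neighborhoods and lower semicontinuity
  have hbasis : ∀ (n : ℕ) (c : ℝ), c < g n x → ∃ t₀ : ℕ, ∀ y : Branches T,
      (∀ i < t₀, y.val i = x.val i) → c < g n y := by
    intro n c hc
    have h1 : {y : Branches T | c < g n y} ∈ 𝓝 x := hlsc n x c hc
    obtain ⟨x0, hx0⟩ := x
    rw [nhds_subtype_eq_comap] at h1
    obtain ⟨W, hW, hWsub⟩ := Filter.mem_comap.1 h1
    rw [nhds_pi] at hW
    obtain ⟨I, hIfin, tset, htset, hsub2⟩ := Filter.mem_pi.1 hW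
    obtain ⟨b, hb⟩ := hIfin.bddAbove
    refine ⟨b + 1, fun y hy => ?_⟩
    apply hWsub
    apply hsub2
    intro i hi
    have : y.val i = x0 i := hy i (Nat.lt_succ_of_le (hb hi))
    rw [this]
    have := htset i
    rw [nhds_discrete] at this
    exact this
  -- basic step facts about L
  have hstep : ∀ q t, L q (t + 1) = L q t + 1 ∨ L q (t + 1) = L q t := by
    intro q t
    simp only [hLdef, hSsucc t, lev_concat]
    split
    · left; rfl
    · right; rfl
  have hmonoL : ∀ q, Monotone (L q) := by
    intro q
    apply monotone_nat_of_le_succ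
    intro t
    rcases hstep q t with h | h <;> omega
  have hLzero : ∀ q, L q 0 = 0 := by
    intro q
    simp only [hLdef]
    rw [show S 0 = [] from initSeg_zero _]
    exact climb_nil _
  have hGood : ∀ q t, L q (t + 1) = L q t + 1 → GoodP g q (L q t + 1) (S (t + 1)) := by
    intro q t h
    have h2 : lev g q (S t ++ [x.val t]) = lev g q (S t) + 1 := by
      rw [← hSsucc t]; exact h
    have := lev_concat_good h2
    rwa [← hSsucc t] at this
  have hCountInc : ∀ q t, CountedQ g q (S (t + 1)) → L q (t + 1) = L q t + 1 := by
    intro q t hC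
    have := hC.1
    rwa [hSdrop t] at this
  have hCountGood : ∀ q t, CountedQ g q (S (t + 1)) → (q : ℝ) < g (L q (t + 1)) x := by
    intro q t hC
    have hinc := hCountInc q t hC
    have hg := hGood q t hinc
    have := hg x (by rw [hSlen (t + 1)])
    rwa [hinc]
  -- unboundedness of the counters for small rationals
  have hunb : ∀ q : ℚ, (q : ℝ) < f x → ∀ K, ∃ t, K ≤ L q t := by
    intro q hq K
    induction K with
    | zero => exact ⟨0, Nat.zero_le _⟩
    | succ K ih =>
      obtain ⟨t, ht⟩ := ih
      by_cases hex : ∃ t', K + 1 ≤ L q t'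
      · exact hex
      push_neg at hex
      obtain ⟨t₀, ht₀⟩ := hbasis (K + 1) q (lt_of_lt_of_le hq (hgf _))
      set t₁ := max t t₀ with ht₁
      have hLt₁ : L q t₁ = K := by
        have h1 := hex t₁
        have h2 := le_trans ht (hmonoL q (le_max_left t t₀))
        rw [← ht₁] at h2
        omega
      have hGP : GoodP g q (K + 1) (S (t₁ + 1)) := by
        intro y hy
        rw [hSlen (t₁ + 1)] at hy
        apply ht₀
        intro i hi
        exact initSeg_eq_imp hy i (by omega)
      have hL1 : L q (t₁ + 1) = K + 1 := by
        have hlev : lev g q (S t₁) = K := hLt₁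
        have hGP' : GoodP g q (K + 1) (S t₁ ++ [x.val t₁]) := by
          rw [← hSsucc t₁]; exact hGP
        show lev g q (S (t₁ + 1)) = K + 1
        rw [hSsucc t₁, lev_concat, hlev, if_pos hGP']
      exact ⟨t₁ + 1, hL1.ge⟩
  -- infinitely many counted times for small rationals
  have hfreq : ∀ q : ℚ, (q : ℝ) < f x → ∀ B : ℕ, ∃ t, B ≤ t ∧ CountedQ g q (S (t + 1)) := by
    intro q hq B
    set K := max ((Denumerable.eqv ℚ) q) (L q (B + 1)) + 1 with hK
    have hencK : (Denumerable.eqv ℚ) q < K := by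
      have := le_max_left ((Denumerable.eqv ℚ) q) (L q (B + 1)); omega
    have hBK : L q (B + 1) < K := by
      have := le_max_right ((Denumerable.eqv ℚ) q) (L q (B + 1)); omega
    have hexK : ∃ t, K ≤ L q t := hunb q hq K
    have ht₁pos : Nat.find hexK ≠ 0 := by
      intro h
      have := Nat.find_spec hexK
      rw [h, hLzero] at this
      omega
    obtain ⟨t, htf⟩ : ∃ t, Nat.find hexK = t + 1 := ⟨Nat.find hexK - 1, by omega⟩
    have hspec : K ≤ L q (t + 1) := by rw [← htf]; exact Nat.find_spec hexK
    have hlt : L q t < K := by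
      have := Nat.find_min hexK (m := t) (by omega)
      omega
    have hstep' := hstep q t
    have hLt1 : L q (t + 1) = L q t + 1 := by omega
    have hLK : L q (t + 1) = K := by omega
    have hBt : B ≤ t := by
      by_contra hBt
      push_neg at hBt
      have := hmonoL q (show t + 1 ≤ B + 1 by omega)
      omega
    refine ⟨t, hBt, ?_, ?_⟩
    · rw [hSdrop t]
      exact hLt1
    · have : L q (t + 1) = lev g q (S (t + 1)) := rfl
      omega
  -- now the limsup computation
  refine le_antisymm ?_ ?_
  · -- f x ≤ limsup
    by_contra hcon
    push_neg at hcon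
    obtain ⟨c, hc1, hc2⟩ := EReal.exists_between_coe_real hcon
    obtain ⟨q, hq1, hq2⟩ := exists_rat_btwn (EReal.coe_lt_coe_iff.1 hc2)
    have hfr : ∃ᶠ t in atTop,
        ((q : ℝ) : EReal) ≤ (fun t : ℕ => ((uFun g (S (t + 1)) : ℝ) : EReal)) t := by
      rw [Filter.frequently_atTop]
      intro B
      obtain ⟨t, hBt, hC⟩ := hfreq q hq2 B
      exact ⟨t, hBt, EReal.coe_le_coe_iff.2 (le_uFun hC)⟩
    have hle := Filter.le_limsup_of_frequently_le hfr
    have : ((q : ℝ) : EReal) < ((q : ℝ) : EReal) :=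
      lt_of_le_of_lt (hle.trans hc1.le) (EReal.coe_lt_coe_iff.2 hq1)
    exact lt_irrefl _ this
  · -- limsup ≤ f x
    by_contra hcon
    push_neg at hcon
    obtain ⟨c, hc1, hc2⟩ := EReal.exists_between_coe_real hcon
    have hfc : f x < c := EReal.coe_lt_coe_iff.1 hc1
    obtain ⟨N, hN⟩ : ∃ N, ∀ n ≥ N, g n x < c := by
      have := (hlim x).eventually_lt_const hfc
      exact Filter.eventually_atTop.1 this
    have hbadq : ∀ (q : ℚ) (t : ℕ), c ≤ (q : ℝ) → CountedQ g q (S (t + 1)) →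
        (Denumerable.eqv ℚ) q < N ∧ L q (t + 1) < N := by
      intro q t hcq hC
      have hgq := hCountGood q t hC
      have hLN : L q (t + 1) < N := by
        by_contra hge
        push_neg at hge
        have := hN _ hge
        linarith
      have henc : (Denumerable.eqv ℚ) q ≤ L q (t + 1) := hC.2
      exact ⟨by omega, hLN⟩
    have hev : ∀ q : ℚ, ∀ᶠ t in atTop, ¬(c ≤ (q : ℝ) ∧ CountedQ g q (S (t + 1))) := by
      intro q
      by_cases hcq : c ≤ (q : ℝ)
      swap
      · exact Filter.Eventually.of_forall fun t h => hcq h.1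
      by_cases hf2 : ∃ᶠ t in atTop, L q (t + 1) = L q t + 1
      · have hub : ∀ K, ∃ t, K ≤ L q t := by
          intro K
          induction K with
          | zero => exact ⟨0, Nat.zero_le _⟩
          | succ K ih =>
            obtain ⟨t, ht⟩ := ih
            obtain ⟨t', ht', hinc⟩ := Filter.frequently_atTop.1 hf2 t
            exact ⟨t' + 1, by have := hmonoL q ht'; omega⟩
        obtain ⟨t₀, ht₀⟩ := hub N
        filter_upwards [Filter.eventually_ge_atTop t₀] with t ht
        rintro ⟨-, hC⟩
        have h1 := (hbadq q t hcq hC).2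
        have h2 := hmonoL q (show t₀ ≤ t + 1 by omega)
        omega
      · rw [Filter.not_frequently] at hf2
        filter_upwards [hf2] with t ht
        rintro ⟨-, hC⟩
        exact ht (hCountInc q t hC)
    have hevall : ∀ᶠ t in atTop, ∀ q ∈ (Finset.range N).image (Denumerable.eqv ℚ).symm,
        ¬(c ≤ (q : ℝ) ∧ CountedQ g q (S (t + 1))) :=
      (Filter.eventually_all_finset _).2 fun q _ => hev q
    have hlen : ∀ᶠ t : ℕ in atTop, -(((t : ℕ) + 1 : ℕ) : ℝ) < c := by
      filter_upwards [Filter.eventually_ge_atTop ⌈-c⌉₊] with t ht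
      have h1 : (-c) ≤ (⌈-c⌉₊ : ℝ) := Nat.le_ceil _
      have h2 : ((⌈-c⌉₊ : ℕ) : ℝ) ≤ (t : ℝ) := Nat.cast_le.2 ht
      push_cast
      linarith
    have hevle : ∀ᶠ t in atTop,
        (fun t : ℕ => ((uFun g (S (t + 1)) : ℝ) : EReal)) t ≤ ((c : ℝ) : EReal) := by
      filter_upwards [hevall, hlen] with t h1 h2
      have hu : uFun g (S (t + 1)) < c := by
        apply uFun_lt
        · rw [hSlen (t + 1)]
          exact_mod_cast h2
        · intro q hC
          by_contra hge
          push_neg at hge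
          have hb := hbadq q t hge hC
          have hqmem : q ∈ (Finset.range N).image (Denumerable.eqv ℚ).symm :=
            Finset.mem_image.2 ⟨(Denumerable.eqv ℚ) q, Finset.mem_range.2 hb.1,
              Equiv.symm_apply_apply _ _⟩
          exact h1 q hqmem ⟨hge, hC⟩
      exact EReal.coe_le_coe_iff.2 hu.le
    have hls := Filter.limsup_le_of_le (h := hevle)
    exact lt_irrefl _ (lt_of_lt_of_le hc2 hls)
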